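/- If T is a tournament of order n, then dac(T) ≥ √n − 1/2. -/

import Mathlib

/-- The subset `S` of vertices induces an acyclic subdigraph of the digraph with
arc relation `A` (i.e. there is no directed cycle all of whose vertices lie in `S`). -/
def AcyclicSet {V : Type*} (A : V → V → Prop) (S : Set V) : Prop :=
  ∀ v : V, ¬ Relation.TransGen (fun x y => x ∈ S ∧ y ∈ S ∧ A x y) v v

/-- `c` is an acyclic vertex coloring of the digraph `A` with `k` colors:
`c` is surjective and every chromatic class induces an acyclic subdigraph. -/
def IsAcyclicColoring {V : Type*} (A : V → V → Prop) {k : ℕ} (c : V → Fin k) : Prop :=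
  Function.Surjective c ∧ ∀ i : Fin k, AcyclicSet A {v | c v = i}

/-- `c` is a complete vertex coloring of the digraph `A` with `k` colors:
`c` is surjective and for every ordered pair of distinct colors `(i, j)` there is
an arc `(u, v)` with `c u = i` and `c v = j`. -/
def IsCompleteColoring {V : Type*} (A : V → V → Prop) {k : ℕ} (c : V → Fin k) : Prop :=
  Function.Surjective c ∧
    ∀ i j : Fin k, i ≠ j → ∃ u v : V, A u v ∧ c u = i ∧ c v = j

/-- The diachromatic number: the largest `k` admitting a complete acyclic `k`-coloring. -/
noncomputable def dac {V : Type*} (A : V → V → Prop) : ℕ :=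
  sSup {k | ∃ c : V → Fin k, IsAcyclicColoring A c ∧ IsCompleteColoring A c}

/-- The dichromatic number: the smallest `k` admitting an acyclic `k`-coloring. -/
noncomputable def dc {V : Type*} (A : V → V → Prop) : ℕ :=
  sInf {k | ∃ c : V → Fin k, IsAcyclicColoring A c}

/-- The pseudoachromatic number: the largest `k` admitting a complete `k`-coloring. -/
noncomputable def psi {V : Type*} (A : V → V → Prop) : ℕ :=
  sSup {k | ∃ c : V → Fin k, IsCompleteColoring A c}

/-- `A` is a tournament: no loops, and for distinct vertices exactly one of the
two possible arcs is present. -/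
def IsTournament {V : Type*} (A : V → V → Prop) : Prop :=
  (∀ v : V, ¬ A v v) ∧ ∀ u v : V, u ≠ v → (A u v ↔ ¬ A v u)

/-!
Split off a longest transitive subtournament `W`, say with `t` vertices, and colour the rest
recursively with `e` colours, where `n - t ≤ e (e + 1)`. Every vertex outside `W` has arcs both to
and from `W` (otherwise it would extend `W`), so `W` can be added as one new class, giving `e + 1`
colours. If `t > 2 e + 2`, pair instead the `i`-th and the `i`-th last vertices of `W` into `⌈t/2⌉`
classes and extend this colouring greedily: a new vertex either meets every class in both
directions and gets a new colour, or joins a class it meets in one direction only. Either way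
`n ≤ k (k + 1)` for the number `k` of colours, i.e. `k ≥ √n - 1/2`.
-/

section

variable {V : Type*} {A : V → V → Prop}

theorem IsTournament.asymm (hT : IsTournament A) {u v : V} (h : A u v) : ¬ A v u :=
  (hT.2 u v fun huv => hT.1 u (huv ▸ h)).1 h

theorem AcyclicSet.mono {S T : Set V} (hS : AcyclicSet A S) (hTS : T ⊆ S) : AcyclicSet A T :=
  fun v hv => hS v (Relation.TransGen.mono (fun _ _ h => ⟨hTS h.1, hTS h.2.1, h.2.2⟩) v v hv)

theorem acyclicSet_of_forall_not {S : Set V} (hS : ∀ x ∈ S, ∀ y ∈ S, ¬ A x y) :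
    AcyclicSet A S := by
  intro v hv
  cases hv with
  | single h => exact hS _ h.1 _ h.2.1 h.2.2
  | tail _ h => exact hS _ h.1 _ h.2.1 h.2.2

/-- A directed cycle in `S ∪ T` that enters `T` can never leave it again. -/
theorem AcyclicSet.union {S T : Set V} (hS : AcyclicSet A S) (hT : AcyclicSet A T)
    (hTS : ∀ x ∈ T, ∀ y ∈ S, ¬ A x y) : AcyclicSet A (S ∪ T) := by
  set r := fun x y => x ∈ S ∪ T ∧ y ∈ S ∪ T ∧ A x y
  have stepT {x y : V} (h : r x y) (hx : x ∈ T) : y ∈ T :=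
    h.2.1.resolve_left fun hy => hTS x hx y hy h.2.2
  have stepS {x y : V} (h : r x y) (hy : y ∈ S) : x ∈ S :=
    h.1.resolve_right fun hx => hTS x hx y hy h.2.2
  have key {x y : V} (h : Relation.TransGen r x y) :
      (x ∈ T → y ∈ T ∧ Relation.TransGen (fun x y => x ∈ T ∧ y ∈ T ∧ A x y) x y) ∧
      (y ∈ S → x ∈ S ∧ Relation.TransGen (fun x y => x ∈ S ∧ y ∈ S ∧ A x y) x y) := by
    induction h with
    | single h =>
      exact ⟨fun hx => ⟨stepT h hx, .single ⟨hx, stepT h hx, h.2.2⟩⟩,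
        fun hy => ⟨stepS h hy, .single ⟨stepS h hy, hy, h.2.2⟩⟩⟩
    | tail _ h ih =>
      refine ⟨fun hx => ?_, fun hy => ?_⟩
      · obtain ⟨hb, hxb⟩ := ih.1 hx
        exact ⟨stepT h hb, hxb.tail ⟨hb, stepT h hb, h.2.2⟩⟩
      · obtain ⟨hx, hxb⟩ := ih.2 (stepS h hy)
        exact ⟨hx, hxb.tail ⟨stepS h hy, hy, h.2.2⟩⟩
  intro v hv
  have hvST : v ∈ S ∪ T := by cases hv with
    | single h => exact h.1
    | tail _ h => exact h.2.1
  rcases hvST with hvS | hvT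
  · exact hS v ((key hv).2 hvS).2
  · exact hT v ((key hv).1 hvT).2

theorem acyclicSet_of_pairwise (hT : IsTournament A) {l : List V} (hl : l.Pairwise A) :
    AcyclicSet A {x | x ∈ l} := by
  induction l with
  | nil => exact acyclicSet_of_forall_not fun x hx => absurd hx List.not_mem_nil
  | cons a l ih =>
    rw [List.pairwise_cons] at hl
    refine AcyclicSet.mono (S := {a} ∪ {x | x ∈ l}) ?_ fun x hx => List.mem_cons.1 hx
    refine (acyclicSet_of_forall_not ?_).union (ih hl.2) ?_
    · rintro x rfl y rfl
      exact hT.1 _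
    · rintro x hx y rfl
      exact hT.asymm (hl.1 x hx)

theorem Finset.image_subset_image_union_piecewise {β : Type*} [DecidableEq V] [DecidableEq β]
    {U W : Finset V} (hUW : Disjoint U W) (f g : V → β) :
    U.image g ⊆ (U ∪ W).image (W.piecewise f g) := by
  intro j hj
  obtain ⟨u, hu, rfl⟩ := Finset.mem_image.1 hj
  exact Finset.mem_image.2 ⟨u, Finset.mem_union_left _ hu,
    Finset.piecewise_eq_of_notMem _ _ _ (Finset.disjoint_left.1 hUW hu)⟩

/-- A complete acyclic colouring of the subdigraph induced by `U`, with colours in `ℕ`; the number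
of colours is `(U.image c).card`. -/
def IsCompleteAcyclicColoringOn (A : V → V → Prop) (U : Finset V) (c : V → ℕ) : Prop :=
  (∀ i, AcyclicSet A {v | v ∈ U ∧ c v = i}) ∧
    ∀ u ∈ U, ∀ w ∈ U, c u ≠ c w → ∃ x ∈ U, ∃ y ∈ U, c x = c u ∧ c y = c w ∧ A x y

namespace IsCompleteAcyclicColoringOn

variable [DecidableEq V] {U W : Finset V} {c : V → ℕ} {i : ℕ}

theorem acyclicSet_piecewise (hc : IsCompleteAcyclicColoringOn A U c)
    (hi : AcyclicSet A ({v | v ∈ U ∧ c v = i} ∪ W)) (j : ℕ) :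
    AcyclicSet A {v | v ∈ U ∪ W ∧ W.piecewise (fun _ => i) c v = j} := by
  by_cases hij : i = j
  · subst hij
    refine hi.mono fun v ⟨hv, hcv⟩ => ?_
    by_cases hvW : v ∈ W
    · exact Or.inr hvW
    · rw [Finset.piecewise_eq_of_notMem _ _ _ hvW] at hcv
      exact Or.inl ⟨(Finset.mem_union.1 hv).resolve_right hvW, hcv⟩
  · refine (hc.1 j).mono fun v ⟨hv, hcv⟩ => ?_
    by_cases hvW : v ∈ W
    · rw [Finset.piecewise_eq_of_mem _ _ _ hvW] at hcv
      exact absurd hcv hij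
    · rw [Finset.piecewise_eq_of_notMem _ _ _ hvW] at hcv
      exact ⟨(Finset.mem_union.1 hv).resolve_right hvW, hcv⟩

theorem union_merge (hc : IsCompleteAcyclicColoringOn A U c) (hUW : Disjoint U W)
    {u₀ : V} (hu₀ : u₀ ∈ U) (hacyc : AcyclicSet A ({v | v ∈ U ∧ c v = c u₀} ∪ W)) :
    IsCompleteAcyclicColoringOn A (U ∪ W) (W.piecewise (fun _ => c u₀) c) := by
  have hU (x : V) (hx : x ∈ U) : W.piecewise (fun _ => c u₀) c x = c x :=
    Finset.piecewise_eq_of_notMem _ _ _ (Finset.disjoint_left.1 hUW hx)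
  have hrep (x : V) (hx : x ∈ U ∪ W) : ∃ x' ∈ U, W.piecewise (fun _ => c u₀) c x = c x' := by
    by_cases hxW : x ∈ W
    · exact ⟨u₀, hu₀, Finset.piecewise_eq_of_mem _ _ _ hxW⟩
    · have hxU := (Finset.mem_union.1 hx).resolve_right hxW
      exact ⟨x, hxU, hU x hxU⟩
  refine ⟨hc.acyclicSet_piecewise hacyc, fun u hu w hw huw => ?_⟩
  obtain ⟨u', hu', hcu⟩ := hrep u hu
  obtain ⟨w', hw', hcw⟩ := hrep w hw
  rw [hcu, hcw] at huw ⊢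
  obtain ⟨x, hx, y, hy, hxu, hyw, hxy⟩ := hc.2 u' hu' w' hw' huw
  exact ⟨x, Finset.mem_union_left _ hx, y, Finset.mem_union_left _ hy,
    (hU x hx).trans hxu, (hU y hy).trans hyw, hxy⟩

theorem union_fresh (hc : IsCompleteAcyclicColoringOn A U c) (hUW : Disjoint U W)
    (hi : i ∉ U.image c) (hW : AcyclicSet A W)
    (hlink : ∀ u ∈ U, (∃ x ∈ W, ∃ y ∈ U, c y = c u ∧ A x y) ∧
      ∃ x ∈ U, ∃ y ∈ W, c x = c u ∧ A x y) :
    IsCompleteAcyclicColoringOn A (U ∪ W) (W.piecewise (fun _ => i) c) := by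
  have hU (x : V) (hx : x ∈ U) : W.piecewise (fun _ => i) c x = c x :=
    Finset.piecewise_eq_of_notMem _ _ _ (Finset.disjoint_left.1 hUW hx)
  have hW' (x : V) (hx : x ∈ W) : W.piecewise (fun _ => i) c x = i :=
    Finset.piecewise_eq_of_mem _ _ _ hx
  refine ⟨hc.acyclicSet_piecewise (hW.mono ?_), fun u hu w hw huw => ?_⟩
  · rintro v (⟨hv, rfl⟩ | hv)
    · exact absurd (Finset.mem_image_of_mem c hv) hi
    · exact hv
  rcases Finset.mem_union.1 hu with hu | hu <;> rcases Finset.mem_union.1 hw with hw | hw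
  · rw [hU u hu, hU w hw] at huw ⊢
    obtain ⟨x, hx, y, hy, hxu, hyw, hxy⟩ := hc.2 u hu w hw huw
    exact ⟨x, Finset.mem_union_left _ hx, y, Finset.mem_union_left _ hy,
      (hU x hx).trans hxu, (hU y hy).trans hyw, hxy⟩
  · obtain ⟨x, hx, y, hy, hxu, hxy⟩ := (hlink u hu).2
    exact ⟨x, Finset.mem_union_left _ hx, y, Finset.mem_union_right _ hy,
      by rw [hU x hx, hU u hu, hxu], by rw [hW' y hy, hW' w hw], hxy⟩
  · obtain ⟨x, hx, y, hy, hyw, hxy⟩ := (hlink w hw).1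
    exact ⟨x, Finset.mem_union_right _ hx, y, Finset.mem_union_left _ hy,
      by rw [hW' x hx, hW' u hu], by rw [hU y hy, hU w hw, hyw], hxy⟩
  · exact absurd ((hW' u hu).trans (hW' w hw).symm) huw

theorem exists_insert (hirr : ∀ v, ¬ A v v) (hc : IsCompleteAcyclicColoringOn A U c) {v : V}
    (hv : v ∉ U) : ∃ c' : V → ℕ, IsCompleteAcyclicColoringOn A (insert v U) c' ∧
      (U.image c).card ≤ ((insert v U).image c').card := by
  have hUv : Disjoint U {v} := Finset.disjoint_singleton_right.2 hv
  have hsingle : AcyclicSet A ({v} : Finset V) :=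
    acyclicSet_of_forall_not fun x hx y hy => by
      rw [Finset.mem_coe, Finset.mem_singleton] at hx hy
      rw [hx, hy]
      exact hirr v
  rw [Finset.insert_eq, Finset.union_comm]
  by_cases hmix : ∃ u₀ ∈ U, (∀ y ∈ U, c y = c u₀ → ¬ A v y) ∨ ∀ x ∈ U, c x = c u₀ → ¬ A x v
  · obtain ⟨u₀, hu₀, hout | hin⟩ := hmix
    · refine ⟨_, hc.union_merge hUv hu₀ ((hc.1 _).union hsingle fun x hx y hy => ?_),
        Finset.card_le_card (Finset.image_subset_image_union_piecewise hUv _ _)⟩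
      rw [Finset.mem_coe, Finset.mem_singleton] at hx
      exact hx ▸ hout y hy.1 hy.2
    · refine ⟨_, hc.union_merge hUv hu₀ ?_,
        Finset.card_le_card (Finset.image_subset_image_union_piecewise hUv _ _)⟩
      rw [Set.union_comm]
      refine hsingle.union (hc.1 _) fun x hx y hy => ?_
      rw [Finset.mem_coe, Finset.mem_singleton] at hy
      exact hy ▸ hin x hx.1 hx.2
  · push Not at hmix
    obtain ⟨i, hi⟩ := Infinite.exists_notMem_finset (U.image c)
    refine ⟨_, hc.union_fresh hUv hi hsingle fun u hu => ⟨?_, ?_⟩,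
      Finset.card_le_card (Finset.image_subset_image_union_piecewise hUv _ _)⟩
    · obtain ⟨y, hy, hyu, hvy⟩ := (hmix u hu).1
      exact ⟨v, Finset.mem_singleton_self v, y, hy, hyu, hvy⟩
    · obtain ⟨x, hx, hxu, hxv⟩ := (hmix u hu).2
      exact ⟨x, hx, v, Finset.mem_singleton_self v, hxu, hxv⟩

theorem exists_extend (hirr : ∀ v, ¬ A v v) (hc : IsCompleteAcyclicColoringOn A W c)
    (hWU : W ⊆ U) : ∃ c' : V → ℕ, IsCompleteAcyclicColoringOn A U c' ∧
      (W.image c).card ≤ (U.image c').card := by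
  suffices h : ∀ S : Finset V, Disjoint W S → ∃ c' : V → ℕ,
      IsCompleteAcyclicColoringOn A (W ∪ S) c' ∧ (W.image c).card ≤ ((W ∪ S).image c').card by
    simpa [Finset.union_sdiff_of_subset hWU] using h (U \ W) Finset.disjoint_sdiff
  intro S
  induction S using Finset.induction_on with
  | empty => exact fun _ => ⟨c, by simpa using hc, by simp⟩
  | insert v S hvS ih =>
    intro hd
    rw [Finset.disjoint_insert_right] at hd
    obtain ⟨c₁, hc₁, hcard₁⟩ := ih hd.2
    have hv : v ∉ W ∪ S := by simp [hd.1, hvS]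
    obtain ⟨c₂, hc₂, hcard₂⟩ := hc₁.exists_insert hirr hv
    rw [Finset.union_insert]
    exact ⟨c₂, hc₂, hcard₁.trans hcard₂⟩

end IsCompleteAcyclicColoringOn

/-- `l` lists the vertices of a transitive subtournament of `U`, each beating all later ones. -/
def IsChainIn (A : V → V → Prop) (U : Finset V) (l : List V) : Prop :=
  l.Pairwise A ∧ ∀ x ∈ l, x ∈ U

section Chains

variable {U : Finset V} {l : List V}

theorem IsChainIn.nodup (hirr : ∀ v, ¬ A v v) (hl : IsChainIn A U l) : l.Nodup :=
  hl.1.imp fun {a b} (hab : A a b) (h : a = b) => hirr b (h ▸ hab)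

theorem IsChainIn.length_le [DecidableEq V] (hirr : ∀ v, ¬ A v v) (hl : IsChainIn A U l) :
    l.length ≤ U.card := by
  rw [← List.toFinset_card_of_nodup (hl.nodup hirr)]
  exact Finset.card_le_card fun x hx => hl.2 x (List.mem_toFinset.1 hx)

theorem exists_longest_chainIn (hirr : ∀ v, ¬ A v v) (U : Finset V) :
    ∃ l, IsChainIn A U l ∧ ∀ l', IsChainIn A U l' → l'.length ≤ l.length := by
  classical
  obtain ⟨l, hl, hlen⟩ :=
    Nat.findGreatest_spec (P := fun t => ∃ l, IsChainIn A U l ∧ l.length = t)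
      (Nat.zero_le U.card) ⟨[], ⟨List.Pairwise.nil, by simp⟩, rfl⟩
  exact ⟨l, hl, fun l' hl' => hlen ▸ Nat.le_findGreatest (hl'.length_le hirr) ⟨l', hl', rfl⟩⟩

/-- A vertex outside a longest chain that only lost to the chain could be prepended to it, and
one that only beat it could be appended. -/
theorem exists_arcs_of_longest (hT : IsTournament A) (hl : IsChainIn A U l)
    (hmax : ∀ l', IsChainIn A U l' → l'.length ≤ l.length) {v : V} (hv : v ∈ U) (hvl : v ∉ l) :
    (∃ x ∈ l, A x v) ∧ ∃ y ∈ l, A v y := by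
  have hne (x : V) (hx : x ∈ l) : x ≠ v := fun h => hvl (h ▸ hx)
  constructor
  · by_contra h
    push Not at h
    have hchain : IsChainIn A U (v :: l) :=
      ⟨List.pairwise_cons.2 ⟨fun x hx => (hT.2 v x (hne x hx).symm).2 (h x hx), hl.1⟩,
        fun x hx => (List.mem_cons.1 hx).elim (· ▸ hv) (hl.2 x)⟩
    simpa using hmax _ hchain
  · by_contra h
    push Not at h
    have hchain : IsChainIn A U (l ++ [v]) :=
      ⟨List.pairwise_append.2 ⟨hl.1, List.pairwise_singleton _ _, fun x hx y hy =>
          (List.mem_singleton.1 hy) ▸ (hT.2 x v (hne x hx)).2 (h x hx)⟩,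
        fun x hx => (List.mem_append.1 hx).elim (hl.2 x) fun hx => List.mem_singleton.1 hx ▸ hv⟩
    simpa using hmax _ hchain

/-- Colour the `k`-th and the `k`-th last vertex of a chain of length `t` alike: this gives
`⌈t / 2⌉` classes, each spanning a subchain, and for colours `i < j` the `i`-th vertex beats both
vertices of colour `j`. -/
theorem exists_fold_coloring [DecidableEq V] (hT : IsTournament A) (hl : l.Pairwise A) :
    ∃ c : V → ℕ, IsCompleteAcyclicColoringOn A l.toFinset c ∧
      (l.length + 1) / 2 ≤ (l.toFinset.image c).card := by
  set t := l.length
  have hnd : l.Nodup := IsChainIn.nodup (U := l.toFinset) hT.1 ⟨hl, fun x => List.mem_toFinset.2⟩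
  set c : V → ℕ := fun x => min (l.idxOf x) (t - 1 - l.idxOf x)
  have hc (k : ℕ) (hk : k < t) : c l[k] = min k (t - 1 - k) := by
    simp only [c, hnd.idxOf_getElem]
  have hmem (k : ℕ) (hk : k < t) : l[k] ∈ l.toFinset := List.mem_toFinset.2 (List.getElem_mem _)
  have harc (j k : ℕ) (hj : j < t) (hk : k < t) (h : j < k) : A l[j] l[k] :=
    List.pairwise_iff_getElem.1 hl j k hj hk h
  refine ⟨c, ⟨fun i => (acyclicSet_of_pairwise hT hl).mono fun x hx =>
    List.mem_toFinset.1 hx.1, fun u hu w hw huw => ?_⟩, ?_⟩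
  · obtain ⟨a, ha, rfl⟩ := List.getElem_of_mem (List.mem_toFinset.1 hu)
    obtain ⟨b, hb, rfl⟩ := List.getElem_of_mem (List.mem_toFinset.1 hw)
    rw [hc a ha, hc b hb] at huw ⊢
    rcases lt_or_gt_of_ne huw with h | h
    · exact ⟨_, hmem _ (by omega), _, hmem _ (by omega), by rw [hc _ (by omega)]; omega,
        by rw [hc _ (by omega)]; omega, harc _ _ (by omega) (by omega) h⟩
    · exact ⟨_, hmem (min a (t - 1 - a)) (by omega), _,
        hmem (t - 1 - min b (t - 1 - b)) (by omega),
        by rw [hc _ (by omega)]; omega, by rw [hc _ (by omega)]; omega,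
        harc _ _ (by omega) (by omega) (by omega)⟩
  · calc (t + 1) / 2 = (Finset.range ((t + 1) / 2)).card := (Finset.card_range _).symm
      _ ≤ _ := Finset.card_le_card fun k hk => by
        rw [Finset.mem_range] at hk
        exact Finset.mem_image.2 ⟨_, hmem k (by omega), by rw [hc k (by omega)]; omega⟩

end Chains

theorem IsCompleteAcyclicColoringOn.exists_add_longest_chain [DecidableEq V]
    (hT : IsTournament A) {U : Finset V} {l : List V} (hl : IsChainIn A U l) (hl₀ : l ≠ [])
    (hmax : ∀ l', IsChainIn A U l' → l'.length ≤ l.length) {c₀ : V → ℕ}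
    (hc₀ : IsCompleteAcyclicColoringOn A (U \ l.toFinset) c₀) :
    ∃ c : V → ℕ, IsCompleteAcyclicColoringOn A U c ∧
      ((U \ l.toFinset).image c₀).card + 1 ≤ (U.image c).card := by
  set W := l.toFinset
  have hWU : W ⊆ U := fun x hx => hl.2 x (List.mem_toFinset.1 hx)
  obtain ⟨i, hi⟩ := Infinite.exists_notMem_finset ((U \ W).image c₀)
  have hlink (u : V) (hu : u ∈ U \ W) := exists_arcs_of_longest hT hl hmax
    (Finset.mem_sdiff.1 hu).1 fun h => (Finset.mem_sdiff.1 hu).2 (List.mem_toFinset.2 h)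
  have hc := hc₀.union_fresh Finset.sdiff_disjoint hi
    ((acyclicSet_of_pairwise hT hl.1).mono fun x hx => List.mem_toFinset.1 hx) fun u hu =>
    ⟨let ⟨x, hx, hxu⟩ := (hlink u hu).1; ⟨x, List.mem_toFinset.2 hx, u, hu, rfl, hxu⟩,
      let ⟨y, hy, huy⟩ := (hlink u hu).2; ⟨u, hu, y, List.mem_toFinset.2 hy, rfl, huy⟩⟩
  obtain ⟨w, hw⟩ := List.toFinset_nonempty_iff l |>.2 hl₀
  have hcard : ((U \ W).image c₀).card + 1 ≤
      (((U \ W) ∪ W).image (W.piecewise (fun _ => i) c₀)).card := by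
    rw [← Finset.card_insert_of_notMem hi]
    exact Finset.card_le_card (Finset.insert_subset (Finset.mem_image.2
      ⟨w, Finset.mem_union_right _ hw, Finset.piecewise_eq_of_mem _ _ _ hw⟩)
      (Finset.image_subset_image_union_piecewise Finset.sdiff_disjoint _ _))
  rw [Finset.sdiff_union_of_subset hWU] at hc hcard
  exact ⟨_, hc, hcard⟩

theorem exists_coloring_card_le_mul_succ [DecidableEq V] (hT : IsTournament A) (U : Finset V) :
    ∃ c : V → ℕ, IsCompleteAcyclicColoringOn A U c ∧
      U.card ≤ (U.image c).card * ((U.image c).card + 1) := by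
  induction U using Finset.strongInduction with
  | H U ih =>
  rcases U.eq_empty_or_nonempty with rfl | ⟨v, hv⟩
  · exact ⟨0, ⟨fun _ => acyclicSet_of_forall_not (by simp), by simp⟩, by simp⟩
  obtain ⟨l, hl, hmax⟩ := exists_longest_chainIn hT.1 U
  have hl₀ : l ≠ [] :=
    List.ne_nil_of_length_pos (hmax [v] ⟨List.pairwise_singleton _ _, by simpa using hv⟩)
  have hWU : l.toFinset ⊆ U := fun x hx => hl.2 x (List.mem_toFinset.1 hx)
  obtain ⟨c₀, hc₀, hcard₀⟩ := ih (U \ l.toFinset)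
    (Finset.sdiff_ssubset hWU (List.toFinset_nonempty_iff l |>.2 hl₀))
  set e := ((U \ l.toFinset).image c₀).card
  have hUcard : U.card = (U \ l.toFinset).card + l.length := by
    rw [Finset.card_sdiff_of_subset hWU, ← List.toFinset_card_of_nodup (hl.nodup hT.1)]
    have := Finset.card_le_card hWU
    omega
  rcases le_or_gt l.length (2 * e + 2) with hshort | hlong
  · obtain ⟨c, hc, hcard⟩ := hc₀.exists_add_longest_chain hT hl hl₀ hmax
    exact ⟨c, hc, by nlinarith [Nat.mul_le_mul hcard (Nat.succ_le_succ hcard)]⟩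
  · obtain ⟨c₂, hc₂, hcard₂⟩ := exists_fold_coloring hT hl.1
    obtain ⟨c, hc, hcard⟩ := hc₂.exists_extend hT.1 hWU
    set m := (l.length + 1) / 2
    have hm : m ≤ (U.image c).card := hcard₂.trans hcard
    have hem : e + 2 ≤ m := by omega
    have hlen : l.length ≤ 2 * m := by omega
    refine ⟨c, hc, ?_⟩
    nlinarith [Nat.mul_le_mul hm (Nat.succ_le_succ hm), Nat.mul_le_mul hem (Nat.succ_le_succ hem)]

theorem IsCompleteAcyclicColoringOn.card_image_le_dac [Fintype V] {c : V → ℕ}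
    (hc : IsCompleteAcyclicColoringOn A Finset.univ c) : (Finset.univ.image c).card ≤ dac A := by
  classical
  set e := (Finset.univ.image c).equivFin
  set c' : V → Fin (Finset.univ.image c).card := fun v =>
    e ⟨c v, Finset.mem_image_of_mem c (Finset.mem_univ v)⟩
  have hc'_eq {u w : V} : c' u = c' w ↔ c u = c w := by simp [c']
  have hsurj : Function.Surjective c' := fun k => by
    obtain ⟨v, -, hv⟩ := Finset.mem_image.1 (e.symm k).2
    exact ⟨v, by simp [c', hv]⟩
  have hbdd : BddAbove {k | ∃ d : V → Fin k, IsAcyclicColoring A d ∧ IsCompleteColoring A d} := by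
    refine ⟨Fintype.card V, ?_⟩
    rintro k ⟨d, hd, -⟩
    simpa using Fintype.card_le_of_surjective d hd.1
  refine le_csSup hbdd ⟨c', ⟨hsurj, fun k => ?_⟩, hsurj, ?_⟩
  · obtain ⟨u, rfl⟩ := hsurj k
    exact (hc.1 (c u)).mono fun v hv => ⟨Finset.mem_univ v, hc'_eq.1 hv⟩
  · intro i j hij
    obtain ⟨u, rfl⟩ := hsurj i
    obtain ⟨w, rfl⟩ := hsurj j
    obtain ⟨x, -, y, -, hxu, hyw, hxy⟩ :=
      hc.2 u (Finset.mem_univ u) w (Finset.mem_univ w) (mt hc'_eq.2 hij)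
    exact ⟨x, y, hxy, hc'_eq.2 hxu, hc'_eq.2 hyw⟩

end

/-- If `T` is a tournament of order `n`, then `dac(T) ≥ √n - 1/2`. -/
theorem stmt11 {V : Type*} [Fintype V] (A : V → V → Prop)
    (hT : IsTournament A) :
    Real.sqrt (Fintype.card V) - 1 / 2 ≤ (dac A : ℝ) := by
  classical
  obtain ⟨c, hc, hcard⟩ := exists_coloring_card_le_mul_succ hT Finset.univ
  have hdac := hc.card_image_le_dac
  have hn : Fintype.card V ≤ dac A * (dac A + 1) :=
    hcard.trans (Nat.mul_le_mul hdac (Nat.succ_le_succ hdac))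
  have hnR : (Fintype.card V : ℝ) ≤ dac A * (dac A + 1) := by exact_mod_cast hn
  rw [sub_le_iff_le_add, Real.sqrt_le_iff]
  exact ⟨by positivity, by nlinarith⟩
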